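/- Let G be a group such that the derived subgroup G' is finite and G/Z(G) can be generated by d elements. Then G/Z(G) is finite and |G/Z(G)| ≤ |G'|^d. -/

import Mathlib

/-! For `x ∈ G` the commutators `⁅x, s⁆`, with `s` running over lifts of a generating set `S` of
`G/Z(G)`, determine the coset `x Z(G)`: if `⁅x, s⁆ = ⁅y, s⁆` for all such `s`, then `y⁻¹ x`
centralizes a generating set modulo the centre, hence lies in `Z(G)`. So `G/Z(G)` embeds into
the set of maps `S → G'`, which has `|G'| ^ |S|` elements. -/

section

open Subgroup QuotientGroup
open scoped commutatorElement

variable {G : Type*} [Group G]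

theorem commute_inv_mul_of_commutatorElement_eq {x y g : G}
    (h : ⁅x, g⁆ = ⁅y, g⁆) : Commute (y⁻¹ * x) g := by
  rw [commutatorElement_def, commutatorElement_def] at h
  have hconj : x * g * x⁻¹ = y * g * y⁻¹ := mul_right_cancel h
  calc y⁻¹ * x * g = y⁻¹ * (x * g * x⁻¹) * x := by group
    _ = y⁻¹ * (y * g * y⁻¹) * x := by rw [hconj]
    _ = g * (y⁻¹ * x) := by group

theorem Subgroup.eq_top_of_map_mk_eq_top {N H : Subgroup G} [N.Normal]
    (hN : N ≤ H) (hH : H.map (mk' N) = ⊤) : H = ⊤ := by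
  have hker : (mk' N).ker ≤ H := (ker_mk' N).symm ▸ hN
  rw [← sup_eq_left.mpr hker, ← comap_map_eq, hH, comap_top]

theorem mem_center_of_forall_commute_out {S : Set (G ⧸ center G)}
    (hS : closure S = ⊤) {c : G} (hc : ∀ s ∈ S, Commute c s.out) : c ∈ center G := by
  have hcent : centralizer {c} = ⊤ := by
    refine eq_top_of_map_mk_eq_top (N := center G) (fun z hz => ?_) ?_
    · exact mem_centralizer_singleton_iff.mpr (mem_center_iff.mp hz c).symm
    · rw [eq_top_iff, ← hS, closure_le]
      exact fun s hs => ⟨s.out, mem_centralizer_singleton_iff.mpr (hc s hs).symm, out_eq' s⟩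
  simpa using centralizer_eq_top_iff_subset.mp hcent

noncomputable def commutatorsWithOut (S : Set (G ⧸ center G)) (q : G ⧸ center G) :
    S → commutator G :=
  fun s => ⟨⁅q.out, (s : G ⧸ center G).out⁆, commutator_mem_commutator (mem_top _) (mem_top _)⟩

theorem commutatorsWithOut_injective {S : Set (G ⧸ center G)} (hS : closure S = ⊤) :
    Function.Injective (commutatorsWithOut S) := by
  intro q₁ q₂ h
  have hc : q₂.out⁻¹ * q₁.out ∈ center G :=
    mem_center_of_forall_commute_out hS fun s hs =>
      commute_inv_mul_of_commutatorElement_eq (congrArg Subtype.val (congrFun h ⟨s, hs⟩))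
  rw [← out_eq' q₁, ← out_eq' q₂]
  exact (QuotientGroup.eq.mpr hc).symm

end

theorem card_central_quotient_le (G : Type*) [Group G] [Finite (commutator G)] (d : ℕ)
    (hgen : ∃ S : Finset (G ⧸ Subgroup.center G), S.card ≤ d ∧
      Subgroup.closure (S : Set (G ⧸ Subgroup.center G)) = ⊤) :
    Finite (G ⧸ Subgroup.center G) ∧
      Nat.card (G ⧸ Subgroup.center G) ≤ Nat.card (commutator G) ^ d := by
  obtain ⟨S, hcard, hS⟩ := hgen
  have hinj := commutatorsWithOut_injective hS
  refine ⟨Finite.of_injective _ hinj, ?_⟩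
  calc Nat.card (G ⧸ Subgroup.center G)
        ≤ Nat.card (↥(S : Set (G ⧸ Subgroup.center G)) → commutator G) :=
        Nat.card_le_card_of_injective _ hinj
    _ = Nat.card (commutator G) ^ S.card := by simp [Nat.card_fun]
    _ ≤ Nat.card (commutator G) ^ d := Nat.pow_le_pow_right Nat.card_pos hcard
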